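/- Ladder operators are symmetry operators of the associated linear equation: if Φ is a smooth solution of the 1D ALE with constants C₁,...,C₅, then the functions (â(t)Φ)(x,t) = (2ħ)^{−1/2}[C(t)(−iħ∂ₓΦ(x,t) − P(t)Φ(x,t)) − B(t)(x−X(t))Φ(x,t)] and (â⁺(t)Φ)(x,t) = (2ħ)^{−1/2}[conj(C(t))(−iħ∂ₓΦ(x,t) − P(t)Φ(x,t)) − conj(B(t))(x−X(t))Φ(x,t)], with B(t) = e^{iΩt}(−ρ+iΩ)/√(Ωμ) and C(t) = e^{iΩt}√(μ/Ω), are again solutions of the same ALE. -/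

import Mathlib

noncomputable section

/-- `X(t) = C₁ sin Ω̄t + C₂ cos Ω̄t`. -/
def Xc (Ωb C₁ C₂ : ℝ) (t : ℝ) : ℝ :=
  C₁ * Real.sin (Ωb * t) + C₂ * Real.cos (Ωb * t)

/-- `P(t) = (1/μ)(Ω̄C₁−ρC₂)cos Ω̄t − (1/μ)(Ω̄C₂+ρC₁)sin Ω̄t`. -/
def Pc (μ ρ Ωb C₁ C₂ : ℝ) (t : ℝ) : ℝ :=
  (1 / μ) * (Ωb * C₁ - ρ * C₂) * Real.cos (Ωb * t)
    - (1 / μ) * (Ωb * C₂ + ρ * C₁) * Real.sin (Ωb * t)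

/-- `D₂₂(t) = C₃ sin 2Ωt + C₄ cos 2Ωt + C₅`. -/
def D22c (Ω C₃ C₄ C₅ : ℝ) (t : ℝ) : ℝ :=
  C₃ * Real.sin (2 * Ω * t) + C₄ * Real.cos (2 * Ω * t) + C₅

/-- The 1D associated linear equation (ALE). -/
def SolvesALE (hbar μ ρ σt κt b c : ℝ) (X D22 : ℝ → ℝ) (Φ : ℝ → ℝ → ℂ) : Prop :=
  ∀ x t : ℝ,
    (-Complex.I * (hbar : ℂ)) * deriv (fun τ => Φ x τ) t
      - ((μ * hbar ^ 2 / 2 : ℝ) : ℂ) * deriv (fun y => deriv (fun z => Φ z t) y) x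
      - Complex.I * (hbar : ℂ) * (ρ : ℂ) *
          ((x : ℂ) * deriv (fun y => Φ y t) x + Φ x t / 2)
      + ((σt / 2 * x ^ 2 : ℝ) : ℂ) * Φ x t
      + ((κt * b * X t * x : ℝ) : ℂ) * Φ x t
      + ((κt * c / 2 * ((X t) ^ 2 + D22 t) : ℝ) : ℂ) * Φ x t = 0

/-- `B(t) = e^{iΩt}(−ρ+iΩ)/√(Ωμ)`. -/
def Bfun (μ ρ Ω : ℝ) (t : ℝ) : ℂ :=
  Complex.exp (Complex.I * (Ω : ℂ) * (t : ℂ)) *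
    ((-(ρ : ℂ) + Complex.I * (Ω : ℂ)) / (Real.sqrt (Ω * μ) : ℂ))

/-- `C(t) = e^{iΩt}√(μ/Ω)`. -/
def Cfun (μ Ω : ℝ) (t : ℝ) : ℂ :=
  Complex.exp (Complex.I * (Ω : ℂ) * (t : ℂ)) * (Real.sqrt (μ / Ω) : ℂ)

/-- `(â(t)Φ)(x,t)`. -/
def aPhi (hbar μ ρ Ω Ωb C₁ C₂ : ℝ) (Φ : ℝ → ℝ → ℂ) (x t : ℝ) : ℂ :=
  ((Real.sqrt (2 * hbar) : ℝ) : ℂ)⁻¹ *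
    (Cfun μ Ω t * (-Complex.I * (hbar : ℂ) * deriv (fun y => Φ y t) x
        - (Pc μ ρ Ωb C₁ C₂ t : ℂ) * Φ x t)
      - Bfun μ ρ Ω t * ((x - Xc Ωb C₁ C₂ t : ℝ) : ℂ) * Φ x t)

/-- `(â⁺(t)Φ)(x,t)`. -/
def adPhi (hbar μ ρ Ω Ωb C₁ C₂ : ℝ) (Φ : ℝ → ℝ → ℂ) (x t : ℝ) : ℂ :=
  ((Real.sqrt (2 * hbar) : ℝ) : ℂ)⁻¹ *
    ((starRingEnd ℂ) (Cfun μ Ω t) *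
        (-Complex.I * (hbar : ℂ) * deriv (fun y => Φ y t) x
          - (Pc μ ρ Ωb C₁ C₂ t : ℂ) * Φ x t)
      - (starRingEnd ℂ) (Bfun μ ρ Ω t) * ((x - Xc Ωb C₁ C₂ t : ℝ) : ℂ) * Φ x t)


lemma hasDerivAt_of_eq {E : Type*} [NormedAddCommGroup E] [NormedSpace ℝ E]
    {f : ℝ → E} {f' g' : E} {x : ℝ}
    (h : HasDerivAt f f' x) (e : f' = g') : HasDerivAt f g' x := e ▸ h

lemma hd_fst {g : ℝ × ℝ → ℂ} (hg : ContDiff ℝ (⊤ : ℕ∞) g) (x t : ℝ) :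
    HasDerivAt (fun y => g (y, t)) (fderiv ℝ g (x, t) (1, 0)) x :=
  (hg.differentiable (by simp) (x, t)).hasFDerivAt.comp_hasDerivAt x
    ((hasDerivAt_id x).prodMk (hasDerivAt_const x t))

lemma hd_snd {g : ℝ × ℝ → ℂ} (hg : ContDiff ℝ (⊤ : ℕ∞) g) (x t : ℝ) :
    HasDerivAt (fun τ => g (x, τ)) (fderiv ℝ g (x, t) (0, 1)) t :=
  (hg.differentiable (by simp) (x, t)).hasFDerivAt.comp_hasDerivAt t
    ((hasDerivAt_const t x).prodMk (hasDerivAt_id t))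

lemma cd_pd {g : ℝ × ℝ → ℂ} (hg : ContDiff ℝ (⊤ : ℕ∞) g) (v : ℝ × ℝ) :
    ContDiff ℝ (⊤ : ℕ∞) (fun p => fderiv ℝ g p v) :=
  (hg.fderiv_right (by simp)).clm_apply contDiff_const

lemma pd_swap {g : ℝ × ℝ → ℂ} (hg : ContDiff ℝ (⊤ : ℕ∞) g) (q v w : ℝ × ℝ) :
    fderiv ℝ (fun p => fderiv ℝ g p v) q w = fderiv ℝ (fun p => fderiv ℝ g p w) q v := by
  have hdf : Differentiable ℝ (fderiv ℝ g) := (hg.fderiv_right (m := (⊤ : ℕ∞)) (by simp)).differentiable (by simp)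
  have key : ∀ u : ℝ × ℝ, fderiv ℝ (fun p => fderiv ℝ g p u) q
      = (ContinuousLinearMap.apply ℝ ℂ u).comp (fderiv ℝ (fderiv ℝ g) q) := by
    intro u
    exact ((ContinuousLinearMap.apply ℝ ℂ u).hasFDerivAt.comp q (hdf q).hasFDerivAt).fderiv
  rw [key v, key w]
  exact second_derivative_symmetric (fun y => (hg.differentiable (by simp) y).hasFDerivAt)
    (hdf q).hasFDerivAt w v

lemma ale_symmetry
    (hbar μ ρ σt κt b c : ℝ) (hμ : μ ≠ 0) (ω s : ℂ)
    (B₀ C₀ : ℝ → ℂ) (X P D22 : ℝ → ℝ) (Ωb2 : ℝ)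
    (hC' : ∀ t, HasDerivAt C₀ (ω * C₀ t) t)
    (hB : ∀ t, (μ : ℂ) * B₀ t = (ω - (ρ : ℂ)) * C₀ t)
    (hω : ω ^ 2 = (ρ : ℂ) ^ 2 - (σt : ℂ) * (μ : ℂ))
    (hX : ∀ t, HasDerivAt X (μ * P t + ρ * X t) t)
    (hP : ∀ t, HasDerivAt P ((1/μ) * (-Ωb2 * X t - ρ * (μ * P t + ρ * X t))) t)
    (hΩb2 : Ωb2 = (σt + κt * b) * μ - ρ ^ 2)
    (Φ : ℝ → ℝ → ℂ) (hsm : ContDiff ℝ (⊤ : ℕ∞) (fun p : ℝ × ℝ => Φ p.1 p.2))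
    (hsol : SolvesALE hbar μ ρ σt κt b c X D22 Φ) :
    SolvesALE hbar μ ρ σt κt b c X D22
      (fun x t => s * (C₀ t * (-Complex.I * (hbar : ℂ) * deriv (fun y => Φ y t) x
          - (P t : ℂ) * Φ x t) - B₀ t * ((x - X t : ℝ) : ℂ) * Φ x t)) := by
  have hμc : (μ : ℂ) ≠ 0 := Complex.ofReal_ne_zero.mpr hμ
  have hB0 : B₀ = fun τ => (ω - (ρ:ℂ)) / μ * C₀ τ := by
    funext τ
    field_simp
    linear_combination hB τ
  set f : ℝ × ℝ → ℂ := fun p => Φ p.1 p.2 with hf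
  set f1 : ℝ × ℝ → ℂ := fun p => fderiv ℝ f p (1, 0) with hf1
  set f2 : ℝ × ℝ → ℂ := fun p => fderiv ℝ f p (0, 1) with hf2
  set f11 : ℝ × ℝ → ℂ := fun p => fderiv ℝ f1 p (1, 0) with hf11
  have hsm1 : ContDiff ℝ (⊤ : ℕ∞) f1 := cd_pd hsm _
  have hsm2 : ContDiff ℝ (⊤ : ℕ∞) f2 := cd_pd hsm _
  have hsm11 : ContDiff ℝ (⊤ : ℕ∞) f11 := cd_pd hsm1 _
  -- partial derivative functions
  set Φ₁ : ℝ → ℝ → ℂ := fun a b' => f1 (a, b') with hPhi1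
  set Φ₂ : ℝ → ℝ → ℂ := fun a b' => f2 (a, b') with hPhi2
  set Φ₁₁ : ℝ → ℝ → ℂ := fun a b' => f11 (a, b') with hPhi11
  set Φ₁₂ : ℝ → ℝ → ℂ := fun a b' => fderiv ℝ f1 (a, b') (0, 1) with hPhi12
  set Φ₂₁ : ℝ → ℝ → ℂ := fun a b' => fderiv ℝ f2 (a, b') (1, 0) with hPhi21
  set Φ₁₁₁ : ℝ → ℝ → ℂ := fun a b' => fderiv ℝ f11 (a, b') (1, 0) with hPhi111
  have hΦ1 : ∀ a b', HasDerivAt (fun y => Φ y b') (Φ₁ a b') a := fun a b' => hd_fst hsm a b'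
  have hΦ2 : ∀ a b', HasDerivAt (fun τ => Φ a τ) (Φ₂ a b') b' := fun a b' => hd_snd hsm a b'
  have hΦ11 : ∀ a b', HasDerivAt (fun y => Φ₁ y b') (Φ₁₁ a b') a := fun a b' => hd_fst hsm1 a b'
  have hΦ12 : ∀ a b', HasDerivAt (fun τ => Φ₁ a τ) (Φ₁₂ a b') b' := fun a b' => hd_snd hsm1 a b'
  have hΦ21 : ∀ a b', HasDerivAt (fun y => Φ₂ y b') (Φ₂₁ a b') a := fun a b' => hd_fst hsm2 a b'
  have hΦ111 : ∀ a b', HasDerivAt (fun y => Φ₁₁ y b') (Φ₁₁₁ a b') a := fun a b' => hd_fst hsm11 a b'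
  have hswap : ∀ a b', Φ₂₁ a b' = Φ₁₂ a b' := fun a b' => pd_swap hsm (a, b') _ _
  have hderiv1 : ∀ a b', deriv (fun y => Φ y b') a = Φ₁ a b' := fun a b' => (hΦ1 a b').deriv
  -- the equation E = 0 in clean form
  have hE : ∀ a b', (-Complex.I * (hbar:ℂ)) * Φ₂ a b'
      - (μ:ℂ) * (hbar:ℂ) ^ 2 / 2 * Φ₁₁ a b'
      - Complex.I * (hbar:ℂ) * (ρ:ℂ) * ((a:ℂ) * Φ₁ a b' + Φ a b' / 2)
      + (σt:ℂ) / 2 * ((a:ℂ) * (a:ℂ)) * Φ a b'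
      + (κt:ℂ) * (b:ℂ) * (X b' : ℂ) * (a:ℂ) * Φ a b'
      + (κt:ℂ) * (c:ℂ) / 2 * ((X b' : ℂ) ^ 2 + (D22 b' : ℂ)) * Φ a b' = 0 := by
    intro a b'
    have h := hsol a b'
    rw [(hΦ2 a b').deriv] at h
    rw [show (fun y => deriv (fun z => Φ z b') y) = fun y => Φ₁ y b' from
      funext fun y => (hΦ1 y b').deriv] at h
    rw [(hΦ11 a b').deriv, (hΦ1 a b').deriv] at h
    push_cast at h
    linear_combination h
  have hEx : ∀ a b', (-Complex.I * (hbar:ℂ)) * Φ₂₁ a b'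
      - (μ:ℂ) * (hbar:ℂ) ^ 2 / 2 * Φ₁₁₁ a b'
      - Complex.I * (hbar:ℂ) * (ρ:ℂ) * ((a:ℂ) * Φ₁₁ a b' + 3 / 2 * Φ₁ a b')
      + (σt:ℂ) * (a:ℂ) * Φ a b' + (σt:ℂ) / 2 * ((a:ℂ) * (a:ℂ)) * Φ₁ a b'
      + (κt:ℂ) * (b:ℂ) * (X b' : ℂ) * Φ a b'
      + (κt:ℂ) * (b:ℂ) * (X b' : ℂ) * (a:ℂ) * Φ₁ a b'
      + (κt:ℂ) * (c:ℂ) / 2 * ((X b' : ℂ) ^ 2 + (D22 b' : ℂ)) * Φ₁ a b' = 0 := by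
    intro a b'
    have hy : HasDerivAt (fun y : ℝ => (y : ℂ)) 1 a := by
      simpa using (hasDerivAt_id a).ofReal_comp
    have t1 := (hΦ21 a b').const_mul (-Complex.I * (hbar:ℂ))
    have t2 := (hΦ111 a b').const_mul ((μ:ℂ) * (hbar:ℂ) ^ 2 / 2)
    have t3 := ((hy.mul (hΦ11 a b')).add ((hΦ1 a b').div_const 2)).const_mul
        (Complex.I * (hbar:ℂ) * (ρ:ℂ))
    have t4 := ((hy.mul hy).const_mul ((σt:ℂ) / 2)).mul (hΦ1 a b')
    have t5 := (hy.const_mul ((κt:ℂ) * (b:ℂ) * (X b' : ℂ))).mul (hΦ1 a b')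
    have t6 := (hΦ1 a b').const_mul ((κt:ℂ) * (c:ℂ) / 2 * ((X b' : ℂ) ^ 2 + (D22 b' : ℂ)))
    have total := ((((t1.sub t2).sub t3).add t4).add t5).add t6
    have h0 := (hasDerivAt_const a (0:ℂ)).congr_of_eventuallyEq
      (Filter.Eventually.of_forall fun y => hE y b')
    linear_combination (norm := (simp only [Pi.mul_apply]; ring)) total.unique h0
  intro x t
  simp only [hB0, Complex.ofReal_sub, hderiv1]
  have hyx : HasDerivAt (fun z : ℝ => (z : ℂ)) 1 x := by
    simpa using (hasDerivAt_id x).ofReal_comp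
  -- first x-derivative of ψ, at an arbitrary point y
  have hx1 : ∀ y : ℝ, HasDerivAt
      (fun z => s * (C₀ t * (-Complex.I * ↑hbar * Φ₁ z t - ↑(P t) * Φ z t) -
          (ω - ↑ρ) / ↑μ * C₀ t * (↑z - ↑(X t)) * Φ z t))
      (s * (C₀ t * (-Complex.I * ↑hbar * Φ₁₁ y t - ↑(P t) * Φ₁ y t) -
          (ω - ↑ρ) / ↑μ * C₀ t * ((↑y - ↑(X t)) * Φ₁ y t + Φ y t))) y := by
    intro y
    have hy : HasDerivAt (fun z : ℝ => (z : ℂ)) 1 y := by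
      simpa using (hasDerivAt_id y).ofReal_comp
    have u1 := (hΦ11 y t).const_mul (-Complex.I * (hbar:ℂ))
    have u2 := (hΦ1 y t).const_mul ((P t : ℂ))
    have uA := (u1.sub u2).const_mul (C₀ t)
    have uB := ((hy.sub (hasDerivAt_const y ((X t : ℝ) : ℂ))).const_mul
        ((ω - (ρ:ℂ)) / (μ:ℂ) * C₀ t)).mul (hΦ1 y t)
    exact hasDerivAt_of_eq ((uA.sub uB).const_mul s) (by push_cast; simp only [Pi.mul_apply, Pi.sub_apply]; ring)
  rw [show (fun y => deriv (fun z =>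
        s * (C₀ t * (-Complex.I * ↑hbar * Φ₁ z t - ↑(P t) * Φ z t) -
          (ω - ↑ρ) / ↑μ * C₀ t * (↑z - ↑(X t)) * Φ z t)) y)
      = fun y => s * (C₀ t * (-Complex.I * ↑hbar * Φ₁₁ y t - ↑(P t) * Φ₁ y t) -
          (ω - ↑ρ) / ↑μ * C₀ t * ((↑y - ↑(X t)) * Φ₁ y t + Φ y t))
    from funext fun y => (hx1 y).deriv]
  rw [(hx1 x).deriv]
  -- second x-derivative
  have hx2 : HasDerivAt
      (fun y => s * (C₀ t * (-Complex.I * ↑hbar * Φ₁₁ y t - ↑(P t) * Φ₁ y t) -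
          (ω - ↑ρ) / ↑μ * C₀ t * ((↑y - ↑(X t)) * Φ₁ y t + Φ y t)))
      (s * (C₀ t * (-Complex.I * ↑hbar * Φ₁₁₁ x t - ↑(P t) * Φ₁₁ x t) -
          (ω - ↑ρ) / ↑μ * C₀ t * ((↑x - ↑(X t)) * Φ₁₁ x t + 2 * Φ₁ x t))) x := by
    have u1 := (hΦ111 x t).const_mul (-Complex.I * (hbar:ℂ))
    have u2 := (hΦ11 x t).const_mul ((P t : ℂ))
    have uA := (u1.sub u2).const_mul (C₀ t)
    have uB := ((((hyx.sub (hasDerivAt_const x ((X t : ℝ) : ℂ))).mul (hΦ11 x t)).add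
        (hΦ1 x t)).const_mul ((ω - (ρ:ℂ)) / (μ:ℂ) * C₀ t))
    exact hasDerivAt_of_eq ((uA.sub uB).const_mul s) (by push_cast; simp only [Pi.mul_apply, Pi.sub_apply]; ring)
  rw [hx2.deriv]
  -- t-derivative
  have ht : HasDerivAt
      (fun τ => s * (C₀ τ * (-Complex.I * ↑hbar * Φ₁ x τ - ↑(P τ) * Φ x τ) -
          (ω - ↑ρ) / ↑μ * C₀ τ * (↑x - ↑(X τ)) * Φ x τ))
      (s * (ω * C₀ t * (-Complex.I * ↑hbar * Φ₁ x t - ↑(P t) * Φ x t)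
          + C₀ t * (-Complex.I * ↑hbar * Φ₁₂ x t
              - 1 / (μ:ℂ) * (-(Ωb2:ℂ) * ↑(X t) - ↑ρ * ((μ:ℂ) * ↑(P t) + ↑ρ * ↑(X t))) * Φ x t
              - ↑(P t) * Φ₂ x t)
          - (ω - ↑ρ) / ↑μ * (ω * C₀ t) * (↑x - ↑(X t)) * Φ x t
          - (ω - ↑ρ) / ↑μ * C₀ t * (-((μ:ℂ) * ↑(P t) + ↑ρ * ↑(X t))) * Φ x t
          - (ω - ↑ρ) / ↑μ * C₀ t * (↑x - ↑(X t)) * Φ₂ x t)) t := by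
    have c1 := hC' t
    have pP := (hP t).ofReal_comp
    have pX := (hX t).ofReal_comp
    have p1 := hΦ12 x t
    have p2 := hΦ2 x t
    have uA := c1.mul ((p1.const_mul (-Complex.I * (hbar:ℂ))).sub (pP.mul p2))
    have uB := ((c1.const_mul ((ω - (ρ:ℂ)) / (μ:ℂ))).mul
        ((hasDerivAt_const t ((x : ℝ) : ℂ)).sub pX)).mul p2
    exact hasDerivAt_of_eq ((uA.sub uB).const_mul s) (by push_cast; simp only [Pi.mul_apply, Pi.sub_apply]; ring)
  rw [ht.deriv]
  have hΩc : (Ωb2 : ℂ) = ((σt:ℂ) + (κt:ℂ) * (b:ℂ)) * (μ:ℂ) - (ρ:ℂ) ^ 2 := by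
    exact_mod_cast hΩb2
  linear_combination (norm := (push_cast; ring_nf; simp only [Complex.I_sq]; field_simp; ring_nf))
    (-Complex.I * (hbar:ℂ) * s * C₀ t) * hEx x t
    + (s * (-C₀ t * (P t : ℂ) - (ω - (ρ:ℂ)) / (μ:ℂ) * C₀ t * ((x:ℂ) - (X t : ℂ)))) * hE x t
    + ((hbar:ℂ) ^ 2 * s * C₀ t) * hswap x t
    + (Complex.I * (hbar:ℂ) * s * C₀ t * Φ x t * ((x:ℂ) - (X t : ℂ)) / (μ:ℂ)) * hω
    - (Complex.I * (hbar:ℂ) * s * C₀ t * Φ x t * (X t : ℂ) / (μ:ℂ)) * hΩc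

/-- Ladder operators are symmetry operators of the associated linear equation. -/
theorem ladder_operators_are_ALE_symmetries
    (hbar μ ρ σ κt a b c : ℝ) (h_hbar : 0 < hbar) (hμ : 0 < μ)
    (σt σ₀ Ω Ωb : ℝ) (hσt : σt = σ + κt * a) (hσ₀ : σ₀ = σ + κt * (a + b))
    (hpos : 0 < σt * μ - ρ ^ 2) (hpos₀ : 0 < σ₀ * μ - ρ ^ 2)
    (hΩ : Ω = Real.sqrt (σt * μ - ρ ^ 2)) (hΩb : Ωb = Real.sqrt (σ₀ * μ - ρ ^ 2))
    (C₁ C₂ C₃ C₄ C₅ : ℝ)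
    (Φ : ℝ → ℝ → ℂ)
    (hsmooth : ContDiff ℝ (⊤ : ℕ∞) (fun p : ℝ × ℝ => Φ p.1 p.2))
    (hsol : SolvesALE hbar μ ρ σt κt b c (Xc Ωb C₁ C₂) (D22c Ω C₃ C₄ C₅) Φ) :
    SolvesALE hbar μ ρ σt κt b c (Xc Ωb C₁ C₂) (D22c Ω C₃ C₄ C₅)
      (aPhi hbar μ ρ Ω Ωb C₁ C₂ Φ) ∧
    SolvesALE hbar μ ρ σt κt b c (Xc Ωb C₁ C₂) (D22c Ω C₃ C₄ C₅)
      (adPhi hbar μ ρ Ω Ωb C₁ C₂ Φ) := by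
  have hμ' : μ ≠ 0 := ne_of_gt hμ
  have hΩpos : 0 < Ω := hΩ ▸ Real.sqrt_pos.mpr hpos
  have hΩsq : Ω ^ 2 = σt * μ - ρ ^ 2 := by rw [hΩ]; exact Real.sq_sqrt hpos.le
  have hΩbsq : Ωb ^ 2 = σ₀ * μ - ρ ^ 2 := by rw [hΩb]; exact Real.sq_sqrt hpos₀.le
  have hσ0 : σ₀ = σt + κt * b := by rw [hσt, hσ₀]; ring
  have hΩb2 : Ωb ^ 2 = (σt + κt * b) * μ - ρ ^ 2 := by rw [hΩbsq, hσ0]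
  -- trig derivative helpers
  have hsin : ∀ t : ℝ, HasDerivAt (fun τ => Real.sin (Ωb * τ)) (Real.cos (Ωb * t) * Ωb) t := by
    intro t
    exact hasDerivAt_of_eq ((Real.hasDerivAt_sin (Ωb * t)).comp t ((hasDerivAt_id t).const_mul Ωb)) (by simp)
  have hcos : ∀ t : ℝ, HasDerivAt (fun τ => Real.cos (Ωb * τ)) (-Real.sin (Ωb * t) * Ωb) t := by
    intro t
    exact hasDerivAt_of_eq ((Real.hasDerivAt_cos (Ωb * t)).comp t ((hasDerivAt_id t).const_mul Ωb)) (by simp)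
  have hXd : ∀ t, HasDerivAt (Xc Ωb C₁ C₂)
      (μ * Pc μ ρ Ωb C₁ C₂ t + ρ * Xc Ωb C₁ C₂ t) t := by
    intro t
    exact hasDerivAt_of_eq (((hsin t).const_mul C₁).add ((hcos t).const_mul C₂))
      (by simp only [Xc, Pc]; field_simp; ring)
  have hPd : ∀ t, HasDerivAt (Pc μ ρ Ωb C₁ C₂)
      ((1/μ) * (-(Ωb ^ 2) * Xc Ωb C₁ C₂ t
        - ρ * (μ * Pc μ ρ Ωb C₁ C₂ t + ρ * Xc Ωb C₁ C₂ t))) t := by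
    intro t
    exact hasDerivAt_of_eq
      (((hcos t).const_mul ((1/μ) * (Ωb * C₁ - ρ * C₂))).sub
        ((hsin t).const_mul ((1/μ) * (Ωb * C₂ + ρ * C₁))))
      (by simp only [Xc, Pc]; field_simp; ring)
  -- Cfun derivative
  have hCd : ∀ t, HasDerivAt (Cfun μ Ω) ((Complex.I * (Ω:ℂ)) * Cfun μ Ω t) t := by
    intro t
    have h1 : HasDerivAt (fun τ : ℝ => Complex.I * (Ω:ℂ) * (τ:ℂ)) (Complex.I * (Ω:ℂ)) t := by
      simpa using ((hasDerivAt_id t).ofReal_comp.const_mul (Complex.I * (Ω:ℂ)))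
    exact hasDerivAt_of_eq (h1.cexp.mul_const ((Real.sqrt (μ/Ω) : ℝ) : ℂ))
      (by simp only [Cfun]; ring)
  -- conj Cfun pointwise formula and derivative
  have hconjCt : ∀ τ : ℝ, (starRingEnd ℂ) (Cfun μ Ω τ)
      = Complex.exp (-(Complex.I * (Ω:ℂ)) * (τ:ℂ)) * ((Real.sqrt (μ/Ω) : ℝ) : ℂ) := by
    intro τ
    simp only [Cfun, map_mul, ← Complex.exp_conj, Complex.conj_ofReal]
    congr 2
    simp only [map_mul, Complex.conj_I, Complex.conj_ofReal]
    ring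
  have hCd' : ∀ t, HasDerivAt (fun τ => (starRingEnd ℂ) (Cfun μ Ω τ))
      ((-(Complex.I * (Ω:ℂ))) * (starRingEnd ℂ) (Cfun μ Ω t)) t := by
    intro t
    have h1 : HasDerivAt (fun τ : ℝ => -(Complex.I * (Ω:ℂ)) * (τ:ℂ))
        (-(Complex.I * (Ω:ℂ))) t := by
      simpa using ((hasDerivAt_id t).ofReal_comp.const_mul (-(Complex.I * (Ω:ℂ))))
    have h2 := h1.cexp.mul_const ((Real.sqrt (μ/Ω) : ℝ) : ℂ)
    rw [show (fun τ => (starRingEnd ℂ) (Cfun μ Ω τ))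
        = fun τ : ℝ => Complex.exp (-(Complex.I * (Ω:ℂ)) * (τ:ℂ)) * ((Real.sqrt (μ/Ω) : ℝ) : ℂ)
      from funext hconjCt]
    exact hasDerivAt_of_eq h2 (by rw [hconjCt t]; ring)
  -- B/C algebraic relation
  have hΩμpos : 0 < Ω * μ := mul_pos hΩpos hμ
  have hkey : Real.sqrt (Ω * μ) * Real.sqrt (μ / Ω) = μ := by
    rw [← Real.sqrt_mul hΩμpos.le]
    rw [show Ω * μ * (μ / Ω) = μ ^ 2 by field_simp]
    exact Real.sqrt_sq hμ.le
  have hkc : (Real.sqrt (Ω * μ) : ℂ) * (Real.sqrt (μ / Ω) : ℂ) = (μ:ℂ) := by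
    exact_mod_cast hkey
  have hne : (Real.sqrt (Ω * μ) : ℂ) ≠ 0 :=
    Complex.ofReal_ne_zero.mpr (Real.sqrt_pos.mpr hΩμpos).ne'
  have hBC : ∀ t, (μ:ℂ) * Bfun μ ρ Ω t
      = (Complex.I * (Ω:ℂ) - (ρ:ℂ)) * Cfun μ Ω t := by
    intro t
    have hsub : ((Real.sqrt (μ/Ω) : ℝ) : ℂ) = (μ:ℂ) / ((Real.sqrt (Ω*μ) : ℝ) : ℂ) := by
      rw [eq_div_iff hne]
      exact_mod_cast (mul_comm (Real.sqrt (μ/Ω)) (Real.sqrt (Ω*μ))).trans hkey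
    simp only [Bfun, Cfun, hsub]
    field_simp
    ring
  have hBC' : ∀ t, (μ:ℂ) * (starRingEnd ℂ) (Bfun μ ρ Ω t)
      = (-(Complex.I * (Ω:ℂ)) - (ρ:ℂ)) * (starRingEnd ℂ) (Cfun μ Ω t) := by
    intro t
    have h := congrArg (starRingEnd ℂ) (hBC t)
    simp only [map_mul, map_sub, Complex.conj_ofReal, Complex.conj_I] at h
    linear_combination h
  have hΩc : ((Ω:ℂ)) ^ 2 = (σt:ℂ) * (μ:ℂ) - (ρ:ℂ) ^ 2 := by exact_mod_cast hΩsq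
  have hωa : (Complex.I * (Ω:ℂ)) ^ 2 = (ρ:ℂ) ^ 2 - (σt:ℂ) * (μ:ℂ) := by
    linear_combination ((Ω:ℂ)) ^ 2 * Complex.I_sq - hΩc
  have hωa' : (-(Complex.I * (Ω:ℂ))) ^ 2 = (ρ:ℂ) ^ 2 - (σt:ℂ) * (μ:ℂ) := by
    linear_combination ((Ω:ℂ)) ^ 2 * Complex.I_sq - hΩc
  constructor
  · exact ale_symmetry hbar μ ρ σt κt b c hμ' (Complex.I * (Ω:ℂ))
      (((Real.sqrt (2 * hbar) : ℝ) : ℂ))⁻¹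
      (Bfun μ ρ Ω) (Cfun μ Ω) (Xc Ωb C₁ C₂) (Pc μ ρ Ωb C₁ C₂) (D22c Ω C₃ C₄ C₅)
      (Ωb ^ 2) hCd hBC hωa hXd hPd hΩb2 Φ hsmooth hsol
  · exact ale_symmetry hbar μ ρ σt κt b c hμ' (-(Complex.I * (Ω:ℂ)))
      (((Real.sqrt (2 * hbar) : ℝ) : ℂ))⁻¹
      (fun t => (starRingEnd ℂ) (Bfun μ ρ Ω t)) (fun t => (starRingEnd ℂ) (Cfun μ Ω t))
      (Xc Ωb C₁ C₂) (Pc μ ρ Ωb C₁ C₂) (D22c Ω C₃ C₄ C₅)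
      (Ωb ^ 2) hCd' hBC' hωa' hXd hPd hΩb2 Φ hsmooth hsol

end
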